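/- arXiv:1412.3062 — 7 statements merged into one kernel-verified Lean document; each statement's English description precedes it below -/
import Mathlib

section
/- For every real number x ≥ 1, the sum of φ(n)/n over positive integers n ≤ x is at most (6/π²)·x + log x + 1. -/
/-!
Möbius inversion of `∑_{d ∣ n} φ d = n` gives `φ n / n = ∑_{d ∣ n} μ d / d`; summing over
`n ≤ N = ⌊x⌋` turns the left side into `∑_{d ≤ N} (μ d / d) ⌊x / d⌋`. The term `d = 1` is exactly
`N`, and for `d ≥ 2` replacing `⌊x / d⌋` by `x / d` costs at most `1 / d`, in total
`H_N - 1 ≤ log x`. What is left is `x ∑_{d ≤ N} μ d / d²`, which exceeds `x ∑_d μ d / d² = 6x / π²`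
by at most `x / N` because `∑_{d > N} 1 / d² ≤ 1 / N`. Finally `N - x + x / N ≤ 1`.
-/

open Finset Real
open scoped ArithmeticFunction.Moebius

section

open ArithmeticFunction

theorem Nat.totient_div_eq_sum_moebius_div {K : Type*} [Field K] [CharZero K] (n : ℕ) :
    (n.totient : K) / n = ∑ d ∈ n.divisors, (μ d : K) / d := by
  rcases n.eq_zero_or_pos with rfl | hn
  · simp
  have inversion := (sum_eq_iff_sum_mul_moebius_eq (f := fun d ↦ (d.totient : K))
    (g := fun d ↦ (d : K))).mp (fun m _ ↦ mod_cast Nat.sum_totient m) n hn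
  rw [← inversion, sum_div, ← Nat.sum_divisorsAntidiagonal (fun a _ ↦ (μ a : K) / a)]
  refine sum_congr rfl fun p hp ↦ ?_
  obtain ⟨rfl, hne⟩ := Nat.mem_divisorsAntidiagonal.mp hp
  have h1 : (p.1 : K) ≠ 0 := by exact_mod_cast left_ne_zero_of_mul hne
  have h2 : (p.2 : K) ≠ 0 := by exact_mod_cast right_ne_zero_of_mul hne
  push_cast
  field_simp

theorem sum_Icc_totient_div_eq (N : ℕ) :
    ∑ n ∈ Icc 1 N, (n.totient : ℝ) / n = ∑ d ∈ Icc 1 N, (μ d : ℝ) / d * (N / d : ℕ) := by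
  have h := sum_Ioc_mul_zeta_eq_sum (pdiv ↑μ ↑ArithmeticFunction.id : ArithmeticFunction ℝ) N
  simp only [coe_mul_zeta_apply, pdiv_apply, intCoe_apply, natCoe_apply, id_apply] at h
  simpa only [← Icc_add_one_left_eq_Ioc, zero_add, ← Nat.totient_div_eq_sum_moebius_div] using h

theorem LSeries_moebius_two : LSeries (fun n ↦ (μ n : ℂ)) 2 = 6 / (π : ℂ) ^ 2 := by
  have h := LSeries_zeta_mul_Lseries_moebius (s := 2) (by norm_num)
  rw [LSeries_zeta_eq_riemannZeta (by norm_num), riemannZeta_two] at h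
  rw [eq_one_div_of_mul_eq_one_right h, one_div_div]

theorem tsum_moebius_div_sq : ∑' d : ℕ, (μ d : ℝ) / d ^ 2 = 6 / π ^ 2 := by
  have hterm (n : ℕ) : LSeries.term (fun n ↦ (μ n : ℂ)) 2 n = ((μ n / n ^ 2 : ℝ) : ℂ) := by
    rcases eq_or_ne n 0 with rfl | hn
    · simp
    · rw [LSeries.term_of_ne_zero hn, Complex.cpow_ofNat]
      push_cast
      rfl
  apply Complex.ofReal_injective
  rw [Complex.ofReal_tsum, ← funext hterm, ← LSeries, LSeries_moebius_two]
  push_cast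
  rfl

end

theorem tsum_inv_sq_nat_add_le {N : ℕ} (hN : N ≠ 0) :
    ∑' k : ℕ, (((k + (N + 1) : ℕ) : ℝ) ^ 2)⁻¹ ≤ (N : ℝ)⁻¹ := by
  refine Summable.tsum_le_of_sum_range_le
    ((summable_nat_add_iff (f := fun n : ℕ ↦ ((n : ℝ) ^ 2)⁻¹) (N + 1)).mpr
      (Real.summable_nat_pow_inv.mpr one_lt_two)) fun m ↦ ?_
  have hreindex : ∑ k ∈ range m, (((k + (N + 1) : ℕ) : ℝ) ^ 2)⁻¹
      = ∑ i ∈ Ioc N (N + m), ((i : ℝ) ^ 2)⁻¹ := by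
    rw [range_eq_Ico, sum_Ico_add' (fun i : ℕ ↦ ((i : ℝ) ^ 2)⁻¹), zero_add,
      ← Icc_add_one_left_eq_Ioc, ← Ico_add_one_right_eq_Icc,
      add_right_comm N m 1, add_comm m]
  rw [hreindex]
  calc _ ≤ (N : ℝ)⁻¹ - ((N + m : ℕ) : ℝ)⁻¹ := sum_Ioc_inv_sq_le_sub hN (by omega)
    _ ≤ (N : ℝ)⁻¹ := sub_le_self _ (by positivity)

theorem sum_Icc_div_sq_le_tsum_add {a : ℕ → ℝ} (ha : ∀ n, |a n| ≤ 1) {N : ℕ} (hN : N ≠ 0) :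
    ∑ d ∈ Icc 1 N, a d / d ^ 2 ≤ ∑' d : ℕ, a d / d ^ 2 + (N : ℝ)⁻¹ := by
  have hbound (d : ℕ) : |a d / d ^ 2| ≤ ((d : ℝ) ^ 2)⁻¹ := by
    rw [abs_div, abs_of_nonneg (sq_nonneg (d : ℝ)), ← one_div]
    exact div_le_div_of_nonneg_right (ha d) (sq_nonneg _)
  have hsum : Summable fun d : ℕ ↦ a d / d ^ 2 :=
    .of_norm_bounded (Real.summable_nat_pow_inv.mpr one_lt_two) hbound
  have htail : -(N : ℝ)⁻¹ ≤ ∑' k : ℕ, a (k + (N + 1)) / ((k + (N + 1) : ℕ) : ℝ) ^ 2 := by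
    grw [← tsum_inv_sq_nat_add_le hN, ← tsum_neg]
    refine Summable.tsum_le_tsum (fun k ↦ neg_le_of_abs_le (hbound _)) ?_
      ((summable_nat_add_iff (f := fun d : ℕ ↦ a d / d ^ 2) (N + 1)).mpr hsum)
    exact ((summable_nat_add_iff (f := fun n : ℕ ↦ ((n : ℝ) ^ 2)⁻¹) (N + 1)).mpr
      (Real.summable_nat_pow_inv.mpr one_lt_two)).neg
  rw [← hsum.sum_add_tsum_nat_add (N + 1), range_eq_Ico,
    sum_eq_sum_Ico_succ_bot (by omega : 0 < N + 1), Ico_add_one_right_eq_Icc]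
  simp only [Nat.cast_zero, zero_pow two_ne_zero, div_zero, zero_add]
  linarith

theorem div_mul_floor_le_div_mul_add {c y d : ℝ} (hc : |c| ≤ 1) (hy : 0 ≤ y) (hd : 0 < d) :
    c / d * ⌊y⌋₊ ≤ c / d * y + 1 / d := by
  have hlo := Nat.lt_floor_add_one y
  have hhi := Nat.floor_le hy
  obtain ⟨hc₁, hc₂⟩ := abs_le.mp hc
  have : c * ⌊y⌋₊ ≤ c * y + 1 := by nlinarith
  rw [div_mul_eq_mul_div, div_mul_eq_mul_div, ← add_div]
  gcongr

theorem sum_Icc_two_inv_le_log {N : ℕ} (hN : N ≠ 0) : ∑ d ∈ Icc 2 N, (d : ℝ)⁻¹ ≤ log N := by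
  have h := harmonic_le_one_add_log N
  rw [harmonic_eq_sum_Icc, ← insert_Icc_add_one_left_eq_Icc (by omega : 1 ≤ N),
    sum_insert (by simp)] at h
  push_cast at h
  linarith

theorem sum_Icc_div_mul_floor_le {a : ℕ → ℝ} (ha : ∀ n, |a n| ≤ 1) (ha₁ : a 1 = 1) {x : ℝ}
    (hx : 1 ≤ x) :
    ∑ d ∈ Icc 1 ⌊x⌋₊, a d / d * ⌊x / d⌋₊ ≤
      ⌊x⌋₊ - x + x * ∑ d ∈ Icc 1 ⌊x⌋₊, a d / d ^ 2 + log x := by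
  have hN : 1 ≤ ⌊x⌋₊ := Nat.le_floor (by exact_mod_cast hx)
  have hterm (d : ℕ) (hd : d ∈ Icc 2 ⌊x⌋₊) :
      a d / d * ⌊x / d⌋₊ ≤ x * (a d / d ^ 2) + (d : ℝ)⁻¹ := by
    have hd : (0 : ℝ) < d := by have := (mem_Icc.mp hd).1; positivity
    calc a d / d * ⌊x / d⌋₊ ≤ a d / d * (x / d) + 1 / d :=
          div_mul_floor_le_div_mul_add (ha d) (by positivity) hd
      _ = x * (a d / d ^ 2) + (d : ℝ)⁻¹ := by ring
  have hlog : log ⌊x⌋₊ ≤ log x :=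
    log_le_log (by exact_mod_cast hN) (Nat.floor_le (by positivity))
  rw [← insert_Icc_add_one_left_eq_Icc hN, sum_insert (by simp), sum_insert (by simp),
    one_add_one_eq_two]
  grw [sum_le_sum hterm, sum_add_distrib, ← mul_sum, sum_Icc_two_inv_le_log (by omega), hlog]
  simp [ha₁]
  linarith

theorem totient_div_sum_le (x : ℝ) (hx : 1 ≤ x) :
    ∑ n ∈ Finset.Icc 1 ⌊x⌋₊, (Nat.totient n : ℝ) / n ≤
      6 / Real.pi ^ 2 * x + Real.log x + 1 := by
  have hN : 1 ≤ ⌊x⌋₊ := Nat.le_floor (by exact_mod_cast hx)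
  have hNx : (⌊x⌋₊ : ℝ) ≤ x := Nat.floor_le (by positivity)
  have hmoebius (n : ℕ) : |(μ n : ℝ)| ≤ 1 := mod_cast ArithmeticFunction.abs_moebius_le_one
  have hpartial := sum_Icc_div_sq_le_tsum_add hmoebius (N := ⌊x⌋₊) (by omega)
  rw [tsum_moebius_div_sq] at hpartial
  have hfloor : x * (⌊x⌋₊ : ℝ)⁻¹ ≤ x - ⌊x⌋₊ + 1 := by
    rw [← div_eq_mul_inv, div_le_iff₀ (by positivity)]
    -- equivalent to `0 ≤ (x - N) (N - 1)`
    nlinarith [(by exact_mod_cast hN : (1 : ℝ) ≤ ⌊x⌋₊)]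
  calc ∑ n ∈ Icc 1 ⌊x⌋₊, (n.totient : ℝ) / n
      = ∑ d ∈ Icc 1 ⌊x⌋₊, (μ d : ℝ) / d * ⌊x / d⌋₊ := by
        simp_rw [sum_Icc_totient_div_eq, Nat.floor_div_natCast]
    _ ≤ ⌊x⌋₊ - x + x * ∑ d ∈ Icc 1 ⌊x⌋₊, (μ d : ℝ) / d ^ 2 + log x :=
        sum_Icc_div_mul_floor_le hmoebius (by simp) hx
    _ ≤ ⌊x⌋₊ - x + x * (6 / π ^ 2 + (⌊x⌋₊ : ℝ)⁻¹) + log x := by gcongr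
    _ ≤ 6 / π ^ 2 * x + log x + 1 := by linarith
end

section
/- For every real number x ≥ 1, the sum of n·φ(n) over positive integers n ≤ x is at most (2/π²)·x³ + (1/2)·x²·log x + x². -/
/-!
Since `n φ(n) = ∑_{dm = n} μ(d) d m²`, the sum equals `∑_{d ≤ x} μ(d) d S(⌊x/d⌋)` with
`S(N) = ∑_{m ≤ N} m² = N(N+1)(2N+1)/6`. Replacing `S(⌊y⌋)` by `y³/3` costs at most
`y²/2 + y/6`, so with `t = ⌊x⌋` the sum is at most
`(x³/3) ∑_{d ≤ t} μ(d)/d² + (x²/2) H_t + x t/6`, where `H_t = ∑_{d ≤ t} 1/d`.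
The Möbius sum is `1/ζ(2) = 6/π²` up to a tail bounded by `∑_{d > t} 1/d² ≤ 1/t`, and
since `H_n - log n` decreases, `H_t ≤ log t + H_2 - log 2 < log t + 5/6` for `t ≥ 2`.
The leftover `x³/(3t) + 5x²/12 + x t/6` is at most `x²` once `t ≥ 3`; the cases `t ≤ 2`
are checked directly.
-/

open Finset Real
open scoped ArithmeticFunction.Moebius

section

open Filter Topology ArithmeticFunction
open scoped LSeries.notation

theorem mul_totient_eq_sum_divisorsAntidiagonal (n : ℕ) :
    (n * n.totient : ℝ) = ∑ p ∈ n.divisorsAntidiagonal, (μ p.1 : ℝ) * p.1 * p.2 ^ 2 := by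
  rcases n.eq_zero_or_pos with rfl | hn
  · simp
  have h := (sum_eq_iff_sum_mul_moebius_eq (R := ℝ) (f := fun n => (n.totient : ℝ))
    (g := fun n => (n : ℝ))).mp (fun m _ => by exact_mod_cast Nat.sum_totient m) n hn
  rw [← h, mul_sum]
  refine sum_congr rfl fun p hp => ?_
  rw [← (Nat.mem_divisorsAntidiagonal.mp hp).1]
  push_cast
  ring

theorem sum_Ioc_mul_totient (N : ℕ) :
    ∑ n ∈ Ioc 0 N, (n * n.totient : ℝ) =
      ∑ d ∈ Ioc 0 N, (μ d : ℝ) * d * ∑ m ∈ Ioc 0 (N / d), (m : ℝ) ^ 2 := by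
  have := sum_Ioc_mul_eq_sum_sum
    ((μ : ArithmeticFunction ℝ).pmul (ArithmeticFunction.id : ArithmeticFunction ℝ))
    (pow 2 : ArithmeticFunction ℝ) N
  simpa [mul_apply, pmul_apply, ← mul_totient_eq_sum_divisorsAntidiagonal] using this

theorem sum_Ioc_sq (N : ℕ) : ∑ m ∈ Ioc 0 N, (m : ℝ) ^ 2 = N * (N + 1) * (2 * N + 1) / 6 := by
  induction N with
  | zero => simp
  | succ n ih =>
    rw [sum_Ioc_succ_top n.zero_le, ih]
    push_cast
    ring

theorem abs_sum_Ioc_sq_floor_sub_le {y : ℝ} (hy : 0 ≤ y) :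
    |∑ m ∈ Ioc 0 ⌊y⌋₊, (m : ℝ) ^ 2 - y ^ 3 / 3| ≤ y ^ 2 / 2 + y / 6 := by
  rw [sum_Ioc_sq, abs_le]
  have hNy : (⌊y⌋₊ : ℝ) ≤ y := Nat.floor_le hy
  have hyN : y ≤ ⌊y⌋₊ + 1 := (Nat.lt_floor_add_one y).le
  set N : ℝ := (⌊y⌋₊ : ℝ)
  have hN : 0 ≤ N := Nat.cast_nonneg _
  constructor
  · nlinarith [mul_nonneg (sub_nonneg.2 hyN) (sq_nonneg y),
      mul_nonneg (sub_nonneg.2 hyN) (mul_nonneg hN hN), mul_nonneg (sub_nonneg.2 hyN) hN]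
  · nlinarith [mul_nonneg (sub_nonneg.2 hNy) (sq_nonneg y),
      mul_nonneg (sub_nonneg.2 hNy) (mul_nonneg hN hN), mul_nonneg (sub_nonneg.2 hNy) hN,
      mul_nonneg (sub_nonneg.2 hNy) (mul_nonneg hN hy)]

theorem moebius_mul_sum_Ioc_sq_floor_div_le {x : ℝ} (hx : 0 ≤ x) {d : ℕ} (hd : d ≠ 0) :
    (μ d : ℝ) * d * ∑ m ∈ Ioc 0 ⌊x / d⌋₊, (m : ℝ) ^ 2 ≤
      x ^ 3 / 3 * ((μ d : ℝ) / d ^ 2) + x ^ 2 / 2 * (d : ℝ)⁻¹ + x / 6 := by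
  have hd₀ : (0 : ℝ) < d := by positivity
  have hE := abs_sum_Ioc_sq_floor_sub_le (div_nonneg hx hd₀.le)
  set E := ∑ m ∈ Ioc 0 ⌊x / d⌋₊, (m : ℝ) ^ 2 - (x / d) ^ 3 / 3
  have hμE : (μ d : ℝ) * E ≤ |E| := by
    refine (le_abs_self _).trans ?_
    rw [abs_mul]
    exact mul_le_of_le_one_left (abs_nonneg _) (by exact_mod_cast abs_moebius_le_one)
  calc (μ d : ℝ) * d * ∑ m ∈ Ioc 0 ⌊x / d⌋₊, (m : ℝ) ^ 2
      = (μ d : ℝ) * d * ((x / d) ^ 3 / 3) + d * ((μ d : ℝ) * E) := by ring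
    _ ≤ (μ d : ℝ) * d * ((x / d) ^ 3 / 3) + d * ((x / d) ^ 2 / 2 + x / d / 6) := by
      gcongr
      exact hμE.trans hE
    _ = x ^ 3 / 3 * ((μ d : ℝ) / d ^ 2) + x ^ 2 / 2 * (d : ℝ)⁻¹ + x / 6 := by
      field_simp
      ring

theorem hasSum_moebius_div_sq :
    HasSum (fun n : ℕ => (μ n : ℝ) / n ^ 2) (6 / π ^ 2) := by
  have hs : 1 < (2 : ℂ).re := by norm_num
  have hL : L ↗μ 2 = 6 / (π : ℂ) ^ 2 := by
    have h := LSeries_zeta_mul_Lseries_moebius hs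
    rw [LSeries_zeta_eq_riemannZeta hs, riemannZeta_two] at h
    rw [eq_div_iff (by simp [pi_ne_zero])]
    linear_combination 6 * h
  have h := (LSeriesSummable_moebius_iff.mpr hs).LSeriesHasSum
  rw [hL, LSeriesHasSum] at h
  refine Complex.hasSum_ofReal.mp ?_
  convert h using 1
  · funext n
    rcases eq_or_ne n 0 with rfl | hn
    · simp
    · rw [LSeries.term_of_ne_zero hn, show (2 : ℂ) = ((2 : ℕ) : ℂ) by norm_num,
        Complex.cpow_natCast]
      push_cast
      ring
  · push_cast
    ring

theorem abs_sub_sum_Ioc_le_of_hasSum {f : ℕ → ℝ} {a : ℝ} (hf : HasSum f a)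
    (hle : ∀ n, |f n| ≤ ((n : ℝ) ^ 2)⁻¹) {t : ℕ} (ht : t ≠ 0) :
    |a - ∑ n ∈ Ioc 0 t, f n| ≤ (t : ℝ)⁻¹ := by
  have hf0 : f 0 = 0 := abs_nonpos_iff.mp (by simpa using hle 0)
  have hpartial : Tendsto (fun N => ∑ n ∈ Ioc 0 N, f n) atTop (𝓝 a) := by
    refine ((tendsto_add_atTop_iff_nat 1).mpr hf.tendsto_sum_nat).congr fun N => ?_
    rw [range_eq_Ico, sum_eq_sum_Ico_succ_bot N.succ_pos, hf0, zero_add]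
    rfl
  refine le_of_tendsto ((hpartial.sub_const _).abs) ?_
  filter_upwards [eventually_ge_atTop t] with N hN
  rw [← sum_Ioc_consecutive _ t.zero_le hN, add_sub_cancel_left]
  calc |∑ n ∈ Ioc t N, f n| ≤ ∑ n ∈ Ioc t N, ((n : ℝ) ^ 2)⁻¹ :=
        (abs_sum_le_sum_abs _ _).trans (sum_le_sum fun n _ => hle n)
    _ ≤ (t : ℝ)⁻¹ - (N : ℝ)⁻¹ := sum_Ioc_inv_sq_le_sub ht hN
    _ ≤ (t : ℝ)⁻¹ := sub_le_self _ (by positivity)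

theorem sum_Ioc_moebius_div_sq_le {t : ℕ} (ht : t ≠ 0) :
    ∑ d ∈ Ioc 0 t, (μ d : ℝ) / d ^ 2 ≤ 6 / π ^ 2 + (t : ℝ)⁻¹ := by
  have hle (n : ℕ) : |(μ n : ℝ) / n ^ 2| ≤ ((n : ℝ) ^ 2)⁻¹ := by
    rw [abs_div, abs_of_nonneg (by positivity : (0 : ℝ) ≤ (n : ℝ) ^ 2), div_eq_mul_inv]
    exact mul_le_of_le_one_left (by positivity) (by exact_mod_cast abs_moebius_le_one)
  have h := abs_sub_sum_Ioc_le_of_hasSum hasSum_moebius_div_sq hle ht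
  linarith [(abs_sub_le_iff.mp h).2]

theorem sum_Ioc_inv_le_log_add {n : ℕ} (hn : 2 ≤ n) :
    ∑ d ∈ Ioc 0 n, (d : ℝ)⁻¹ ≤ Real.log n + 5 / 6 := by
  have h := strictAnti_eulerMascheroniSeq'.antitone hn
  simp only [eulerMascheroniSeq', if_neg (by omega : n ≠ 0), if_neg two_ne_zero] at h
  have h2 : (harmonic 2 : ℝ) = 3 / 2 := by norm_num [harmonic]
  have := log_two_gt_d9
  rw [← Icc_add_one_left_eq_Ioc, zero_add]
  push_cast [harmonic_eq_sum_Icc] at h h2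
  linarith

end

theorem cubic_remainder_le_sq {T x : ℝ} (hT : 3 ≤ T) (hTx : T ≤ x) (hxT : x ≤ T + 1) :
    x ^ 3 / 3 * T⁻¹ + x ^ 2 / 2 * (5 / 6) + x / 6 * T ≤ x ^ 2 := by
  have hx : 0 < x := by linarith
  have hgap : x ^ 2 - (x ^ 3 / 3 * T⁻¹ + x ^ 2 / 2 * (5 / 6) + x / 6 * T) =
      x / (6 * T) * (T ^ 2 - (x - T) * (4 * x - 3 * T)) / 2 := by
    field_simp
    ring
  have hprod : (x - T) * (4 * x - 3 * T) ≤ T + 4 := by nlinarith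
  have hfactor : 0 ≤ T ^ 2 - (x - T) * (4 * x - 3 * T) := by nlinarith
  rw [← sub_nonneg, hgap]
  positivity

theorem sum_Icc_mul_totient_le_sq_of_le_two {t : ℕ} (ht : t ≤ 2) :
    ∑ n ∈ Icc 1 t, n * n.totient ≤ t ^ 2 := by
  interval_cases t <;> decide

theorem mul_totient_sum_le (x : ℝ) (hx : 1 ≤ x) :
    ∑ n ∈ Finset.Icc 1 ⌊x⌋₊, (n : ℝ) * (Nat.totient n : ℝ) ≤
      2 / Real.pi ^ 2 * x ^ 3 + 1 / 2 * x ^ 2 * Real.log x + x ^ 2 := by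
  set t := ⌊x⌋₊
  have htx : (t : ℝ) ≤ x := Nat.floor_le (by linarith)
  have hxt : x < t + 1 := Nat.lt_floor_add_one x
  rcases lt_or_ge t 3 with hsmall | hlarge
  · have hsum : ∑ n ∈ Icc 1 t, (n : ℝ) * n.totient ≤ t ^ 2 := by
      exact_mod_cast sum_Icc_mul_totient_le_sq_of_le_two (by omega)
    have : (t : ℝ) ^ 2 ≤ x ^ 2 := by gcongr
    have : 0 ≤ 2 / π ^ 2 * x ^ 3 + 1 / 2 * x ^ 2 * Real.log x := by
      have := Real.log_nonneg hx
      positivity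
    linarith
  have ht : (3 : ℝ) ≤ t := by exact_mod_cast hlarge
  rw [show Icc 1 t = Ioc 0 t from Icc_add_one_left_eq_Ioc 0 t, sum_Ioc_mul_totient]
  calc ∑ d ∈ Ioc 0 t, (μ d : ℝ) * d * ∑ m ∈ Ioc 0 (t / d), (m : ℝ) ^ 2
    _ ≤ ∑ d ∈ Ioc 0 t, (x ^ 3 / 3 * ((μ d : ℝ) / d ^ 2)
          + x ^ 2 / 2 * (d : ℝ)⁻¹ + x / 6) := sum_le_sum fun d hd => by
        rw [← Nat.floor_div_natCast]
        exact moebius_mul_sum_Ioc_sq_floor_div_le (by linarith) (mem_Ioc.mp hd).1.ne'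
    _ = x ^ 3 / 3 * ∑ d ∈ Ioc 0 t, (μ d : ℝ) / d ^ 2
          + x ^ 2 / 2 * ∑ d ∈ Ioc 0 t, (d : ℝ)⁻¹ + x / 6 * t := by
        simp [sum_add_distrib, mul_sum, mul_comm]
    _ ≤ x ^ 3 / 3 * (6 / π ^ 2 + (t : ℝ)⁻¹) + x ^ 2 / 2 * (Real.log x + 5 / 6) + x / 6 * t := by
        gcongr
        · exact sum_Ioc_moebius_div_sq_le (by omega)
        · exact (sum_Ioc_inv_le_log_add (by omega)).trans (by gcongr)
    _ ≤ 2 / π ^ 2 * x ^ 3 + 1 / 2 * x ^ 2 * Real.log x + x ^ 2 := by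
        linear_combination cubic_remainder_le_sq ht htx hxt.le
end

section
/- Let p be a prime, let A ≥ 2, N ≥ 1, M, a₁, a₂, k be integers with p > N, 1 ≤ a₁, a₂ ≤ A, and a₁ ≠ a₂. Then the number of pairs of integers (n₁, n₂) with M < n₁, n₂ ≤ M + N and a₁·n₂ − a₂·n₁ = k·p is at most N·gcd(a₁,a₂)/max(a₁,a₂) + 1. -/
open Finset

/-!
If `(x, y)` and `(x', y')` both solve `a * y - b * x = c` with `a > 0`, then
`a * (y - y') = b * (x - x')`, so `x ≡ x' [ZMOD a / gcd a b]`, and a solution is determined by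
its first coordinate. The first coordinates thus lie in one residue class modulo `a / gcd a b`
inside an interval of length `N`, giving at most `N * gcd a b / a + 1` solutions. Swapping the
coordinates lets `a` be the larger coefficient.
-/

noncomputable def boxSolutions (M N a b c : ℤ) : Finset (ℤ × ℤ) :=
  (Icc (M + 1) (M + N) ×ˢ Icc (M + 1) (M + N)).filter (fun q => a * q.2 - b * q.1 = c)

lemma Int.card_le_of_subset_Ioc_of_modEq {a b r : ℤ} (hab : a ≤ b) (hr : 0 < r) {S : Finset ℤ}
    (hS : S ⊆ Ioc a b) (hmod : ∀ x ∈ S, ∀ y ∈ S, x ≡ y [ZMOD r]) :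
    (#S : ℝ) ≤ (b - a) / r + 1 := by
  have hpos : (0 : ℚ) ≤ (b - a) / r + 1 := by
    have : (0 : ℚ) ≤ (b - a) / r := div_nonneg (by simpa using hab) (by exact_mod_cast hr.le)
    linarith
  obtain rfl | ⟨v, hv⟩ := S.eq_empty_or_nonempty
  · exact_mod_cast hpos
  have hsub : S ⊆ {x ∈ Ioc a b | x ≡ v [ZMOD r]} := fun x hx =>
    mem_filter.2 ⟨hS hx, hmod x hx v hv⟩
  have hcard : (#S : ℤ) ≤ max (⌊(b - v) / (r : ℚ)⌋ - ⌊(a - v) / (r : ℚ)⌋) 0 := by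
    rw [← Int.Ioc_filter_modEq_card _ _ hr]
    exact_mod_cast card_le_card hsub
  have hfloor :
      ((⌊(b - v) / (r : ℚ)⌋ - ⌊(a - v) / (r : ℚ)⌋ : ℤ) : ℚ) ≤ (b - a) / r + 1 := by
    have h₁ := Int.floor_le ((b - v) / (r : ℚ))
    have h₂ := Int.sub_one_lt_floor ((a - v) / (r : ℚ))
    have : (b - a) / (r : ℚ) = (b - v) / r - (a - v) / r := by ring
    push_cast
    linarith
  have hq : (#S : ℚ) ≤ (b - a) / r + 1 :=
    (Int.cast_le.2 hcard).trans (by push_cast; exact max_le (by exact_mod_cast hfloor) hpos)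
  exact_mod_cast hq

section boxSolutions

variable {M N a b c : ℤ}

lemma mem_boxSolutions {q : ℤ × ℤ} :
    q ∈ boxSolutions M N a b c ↔
      (M < q.1 ∧ q.1 ≤ M + N) ∧ (M < q.2 ∧ q.2 ≤ M + N) ∧ a * q.2 - b * q.1 = c := by
  simp only [boxSolutions, mem_filter, mem_product, mem_Icc, Int.add_one_le_iff, and_assoc]

lemma card_boxSolutions_swap : #(boxSolutions M N b a (-c)) = #(boxSolutions M N a b c) :=
  card_nbij' Prod.swap Prod.swap
    (fun q hq => by
      simp only [mem_coe, mem_boxSolutions, Prod.fst_swap, Prod.snd_swap] at hq ⊢; omega)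
    (fun q hq => by
      simp only [mem_coe, mem_boxSolutions, Prod.fst_swap, Prod.snd_swap] at hq ⊢; omega)
    (fun q _ => q.swap_swap) (fun q _ => q.swap_swap)

lemma injOn_fst_boxSolutions (ha : a ≠ 0) :
    Set.InjOn Prod.fst (boxSolutions M N a b c : Set (ℤ × ℤ)) := by
  intro q hq q' hq' h
  rw [mem_coe, mem_boxSolutions] at hq hq'
  refine Prod.ext h (mul_left_cancel₀ ha ?_)
  linear_combination hq.2.2 - hq'.2.2 + b * h

lemma fst_modEq_of_mem_boxSolutions (ha : 0 < a) {q q' : ℤ × ℤ}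
    (hq : q ∈ boxSolutions M N a b c) (hq' : q' ∈ boxSolutions M N a b c) :
    q.1 ≡ q'.1 [ZMOD a / Int.gcd a b] := by
  rw [mem_boxSolutions] at hq hq'
  refine Int.ModEq.cancel_left_div_gcd ha ((Int.modEq_iff_dvd).2 ⟨q'.2 - q.2, ?_⟩)
  linear_combination hq.2.2 - hq'.2.2

lemma card_boxSolutions_le (hN : 0 ≤ N) (ha : 0 < a) :
    (#(boxSolutions M N a b c) : ℝ) ≤ N * Int.gcd a b / a + 1 := by
  have hg : 0 < (a.gcd b : ℤ) := by exact_mod_cast Int.gcd_pos_of_ne_zero_left b ha.ne'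
  have hga : (a.gcd b : ℤ) ∣ a := Int.gcd_dvd_left a b
  have hfst : (boxSolutions M N a b c).image Prod.fst ⊆ Ioc M (M + N) := by
    intro x hx
    obtain ⟨q, hq, rfl⟩ := mem_image.1 hx
    exact mem_Ioc.2 (mem_boxSolutions.1 hq).1
  have hmod : ∀ x ∈ (boxSolutions M N a b c).image Prod.fst,
      ∀ y ∈ (boxSolutions M N a b c).image Prod.fst, x ≡ y [ZMOD a / a.gcd b] := by
    simp only [mem_image]
    rintro _ ⟨q, hq, rfl⟩ _ ⟨q', hq', rfl⟩
    exact fst_modEq_of_mem_boxSolutions ha hq hq'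
  have hbound := Int.card_le_of_subset_Ioc_of_modEq (by omega)
    (Int.ediv_pos_of_pos_of_dvd ha hg.le hga) hfst hmod
  rw [card_image_of_injOn (injOn_fst_boxSolutions ha.ne'), Int.cast_div hga (by positivity)] at hbound
  convert hbound using 2
  push_cast
  field_simp
  ring

end boxSolutions

theorem counting_pairs_bound_general (p : ℕ) (N : ℤ) (M a₁ a₂ k : ℤ)
    (hN : 1 ≤ N) (ha₁ : 1 ≤ a₁) (ha₂ : 1 ≤ a₂) :
    (((Finset.Icc (M + 1) (M + N) ×ˢ Finset.Icc (M + 1) (M + N)).filter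
        (fun q : ℤ × ℤ => a₁ * q.2 - a₂ * q.1 = k * (p : ℤ))).card : ℝ) ≤
      (N : ℝ) * (Int.gcd a₁ a₂ : ℝ) / (max a₁ a₂ : ℤ) + 1 := by
  change (#(boxSolutions M N a₁ a₂ (k * p)) : ℝ) ≤ _
  rcases le_total a₂ a₁ with h | h
  · rw [max_eq_left h]
    exact card_boxSolutions_le (by omega) (by omega)
  · rw [max_eq_right h, ← card_boxSolutions_swap, Int.gcd_comm]
    exact card_boxSolutions_le (by omega) (by omega)

theorem counting_pairs_bound (p : ℕ) (hp : p.Prime) (A N : ℤ) (M a₁ a₂ k : ℤ)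
    (hA : 2 ≤ A) (hN : 1 ≤ N) (hNp : N < (p : ℤ))
    (ha₁ : 1 ≤ a₁) (ha₁A : a₁ ≤ A) (ha₂ : 1 ≤ a₂) (ha₂A : a₂ ≤ A) (hne : a₁ ≠ a₂) :
    (((Finset.Icc (M + 1) (M + N) ×ˢ Finset.Icc (M + 1) (M + N)).filter
        (fun q : ℤ × ℤ => a₁ * q.2 - a₂ * q.1 = k * (p : ℤ))).card : ℝ) ≤
      (N : ℝ) * (Int.gcd a₁ a₂ : ℝ) / (max a₁ a₂ : ℤ) + 1 :=
  counting_pairs_bound_general p N M a₁ a₂ k hN ha₁ ha₂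
end

section
/- For every real number x ≥ 1, the sum of 1/d over positive integers d ≤ x is less than log x + γ + 1/x, where γ is the Euler–Mascheroni constant. -/
/-!
With `n = ⌊x⌋`, the sequence `H_n - log (n + 1)` increases strictly to `γ`, so `H_n < γ + log (n + 1)`;
and since `log` is concave and `n + 1 ≤ x + 1`, `log (n + 1) ≤ log x + 1 / x`.
-/

open Finset Real

lemma Real.log_le_log_add_sub_div {x y : ℝ} (hx : 0 < x) (hy : 0 < y) :
    log y ≤ log x + (y - x) / x := by
  have h := log_le_sub_one_of_pos (div_pos hy hx)
  rw [log_div hy.ne' hx.ne', div_sub_one hx.ne'] at h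
  linarith

lemma sum_Icc_one_div_eq_harmonic (n : ℕ) :
    ∑ d ∈ Icc 1 n, (1 : ℝ) / d = harmonic n := by
  simp [harmonic_eq_sum_Icc, one_div]

lemma Real.log_floor_add_one_le {x : ℝ} (hx : 0 < x) :
    log (⌊x⌋₊ + 1) ≤ log x + 1 / x :=
  calc log (⌊x⌋₊ + 1) ≤ log x + (⌊x⌋₊ + 1 - x) / x := log_le_log_add_sub_div hx (by positivity)
    _ ≤ log x + 1 / x := by gcongr; linarith [Nat.floor_le hx.le]

theorem harmonic_sum_lt (x : ℝ) (hx : 1 ≤ x) :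
    ∑ d ∈ Finset.Icc 1 ⌊x⌋₊, (1 : ℝ) / d <
      Real.log x + Real.eulerMascheroniConstant + 1 / x := by
  have hγ : (harmonic ⌊x⌋₊ : ℝ) - log (⌊x⌋₊ + 1) < eulerMascheroniConstant :=
    eulerMascheroniSeq_lt_eulerMascheroniConstant _
  have hlog := log_floor_add_one_le (x := x) (by linarith)
  rw [sum_Icc_one_div_eq_harmonic]
  linarith
end

section
/- For every integer A ≥ 1, the sum of (a₁ + a₂)/gcd(a₁, a₂) over pairs of integers 1 ≤ a₁ < a₂ ≤ A equals (3/2) times the sum over d ≤ A of the sum over 2 ≤ b ≤ A/d of b·φ(b). -/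
open Finset

lemma coprime_sub (n a : ℕ) (h1 : 1 ≤ a) (h2 : a < n) :
    n.Coprime (n - a) ↔ n.Coprime a := by
  unfold Nat.Coprime
  rw [← Nat.gcd_sub_self_left (show n - a ≤ n by omega), show n - (n - a) = a by omega,
    Nat.gcd_sub_self_right (le_of_lt h2), Nat.gcd_comm]

lemma sum_totatives_two_mul (n : ℕ) (hn : 2 ≤ n) :
    ∑ x ∈ (Finset.range n).filter n.Coprime, (2 * x) = n * n.totient := by
  have hx1 : ∀ x ∈ (Finset.range n).filter n.Coprime, 1 ≤ x ∧ x < n := by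
    intro x hx
    simp only [mem_filter, mem_range] at hx
    refine ⟨?_, hx.1⟩
    rcases Nat.eq_zero_or_pos x with rfl | h
    · exfalso; have := hx.2; simp [Nat.Coprime] at this; omega
    · exact h
  have hswap : ∑ x ∈ (Finset.range n).filter n.Coprime, x
      = ∑ x ∈ (Finset.range n).filter n.Coprime, (n - x) := by
    refine Finset.sum_nbij' (fun x => n - x) (fun x => n - x) ?_ ?_ ?_ ?_ ?_
    · intro a ha
      obtain ⟨h1, h2⟩ := hx1 a ha
      simp only [mem_filter, mem_range] at ha ⊢
      exact ⟨by omega, (coprime_sub n a h1 h2).mpr ha.2⟩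
    · intro a ha
      obtain ⟨h1, h2⟩ := hx1 a ha
      simp only [mem_filter, mem_range] at ha ⊢
      exact ⟨by omega, (coprime_sub n a h1 h2).mpr ha.2⟩
    · intro a ha; obtain ⟨h1, h2⟩ := hx1 a ha; omega
    · intro a ha; obtain ⟨h1, h2⟩ := hx1 a ha; omega
    · intro a ha; obtain ⟨h1, h2⟩ := hx1 a ha; omega
  have heq : ∑ x ∈ (Finset.range n).filter n.Coprime, (2 * x)
      = ∑ x ∈ (Finset.range n).filter n.Coprime, (x + (n - x)) := by
    rw [Finset.sum_add_distrib, ← hswap]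
    simp [two_mul, Finset.sum_add_distrib]
  rw [heq]
  rw [Finset.sum_congr rfl (fun x hx => by obtain ⟨h1, h2⟩ := hx1 x hx; omega :
    ∀ x ∈ (Finset.range n).filter n.Coprime, x + (n - x) = n)]
  rw [Finset.sum_const, Nat.totient, smul_eq_mul, Nat.mul_comm]

lemma inner_eval (b : ℕ) (hb : 2 ≤ b) :
    ∑ x ∈ (Finset.range b).filter b.Coprime, ((x : ℝ) + b)
      = 3 / 2 * ((b : ℝ) * (Nat.totient b : ℝ)) := by
  have h2 : (2 : ℝ) * ∑ x ∈ (Finset.range b).filter b.Coprime, (x : ℝ)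
      = (b : ℝ) * (Nat.totient b : ℝ) := by
    have := sum_totatives_two_mul b hb
    have := congrArg (fun n : ℕ => (n : ℝ)) this
    push_cast at this
    rw [← Finset.mul_sum] at this
    exact this
  rw [Finset.sum_add_distrib, Finset.sum_const, nsmul_eq_mul]
  have hcard : ((Finset.range b).filter b.Coprime).card = Nat.totient b := rfl
  rw [hcard]
  linarith

lemma fiber_eval (A d : ℕ) (hd1 : 1 ≤ d) :
    ∑ q ∈ ((Finset.Icc 1 A ×ˢ Finset.Icc 1 A).filter (fun q : ℕ × ℕ => q.1 < q.2)).filter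
        (fun q : ℕ × ℕ => Nat.gcd q.1 q.2 = d),
        ((q.1 : ℝ) + q.2) / (Nat.gcd q.1 q.2 : ℝ)
      = ∑ b ∈ Finset.Icc 2 (A / d), ∑ x ∈ (Finset.range b).filter b.Coprime, ((x : ℝ) + b) := by
  rw [Finset.sum_sigma']
  have hdpos : 0 < d := hd1
  refine Finset.sum_nbij' (fun q => ⟨q.2 / d, q.1 / d⟩)
    (fun p => (d * p.2, d * p.1)) ?_ ?_ ?_ ?_ ?_
  · rintro ⟨a1, a2⟩ hq
    simp only [Finset.mem_filter, Finset.mem_product, Finset.mem_Icc] at hq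
    obtain ⟨⟨⟨⟨ha11, ha12⟩, ha21, ha22⟩, hlt⟩, hg⟩ := hq
    have hd1' : d ∣ a1 := hg ▸ Nat.gcd_dvd_left a1 a2
    have hd2' : d ∣ a2 := hg ▸ Nat.gcd_dvd_right a1 a2
    have hx1 : 1 ≤ a1 / d := Nat.one_le_div_iff hdpos |>.mpr (Nat.le_of_dvd (by omega) hd1')
    have hxb : a1 / d < a2 / d := Nat.div_lt_div_of_lt_of_dvd hd2' hlt
    have hco : Nat.Coprime (a1 / d) (a2 / d) := by
      have := Nat.coprime_div_gcd_div_gcd (m := a1) (n := a2) (by omega)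
      rwa [hg] at this
    simp only [Finset.mem_sigma, Finset.mem_Icc, Finset.mem_filter, Finset.mem_range]
    refine ⟨⟨by omega, ?_⟩, hxb, Nat.coprime_comm.mp hco⟩
    · rw [Nat.le_div_iff_mul_le hdpos]
      calc a2 / d * d = a2 := Nat.div_mul_cancel hd2'
        _ ≤ A := ha22
  · rintro ⟨b, x⟩ hp
    simp only [Finset.mem_sigma, Finset.mem_Icc, Finset.mem_filter, Finset.mem_range] at hp
    obtain ⟨⟨hb2, hbA⟩, hxb, hco⟩ := hp
    have hx1 : 1 ≤ x := by
      rcases Nat.eq_zero_or_pos x with rfl | h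
      · exfalso; simp [Nat.Coprime] at hco; omega
      · exact h
    have hdbA : d * b ≤ A := by
      rw [Nat.mul_comm]; exact (Nat.le_div_iff_mul_le hdpos).mp hbA
    simp only [Finset.mem_filter, Finset.mem_product, Finset.mem_Icc]
    have hlt2 : d * x < d * b := (Nat.mul_lt_mul_left hdpos).mpr hxb
    refine ⟨⟨⟨⟨Nat.mul_pos hdpos hx1, by omega⟩, Nat.mul_pos hdpos (by omega), hdbA⟩, hlt2⟩, ?_⟩
    · rw [Nat.gcd_mul_left, Nat.coprime_comm.mp hco, Nat.mul_one]
  · rintro ⟨a1, a2⟩ hq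
    simp only [Finset.mem_filter, Finset.mem_product, Finset.mem_Icc] at hq
    obtain ⟨⟨⟨⟨ha11, ha12⟩, ha21, ha22⟩, hlt⟩, hg⟩ := hq
    have hd1' : d ∣ a1 := hg ▸ Nat.gcd_dvd_left a1 a2
    have hd2' : d ∣ a2 := hg ▸ Nat.gcd_dvd_right a1 a2
    simp only [Prod.mk.injEq]
    exact ⟨Nat.mul_div_cancel' hd1', Nat.mul_div_cancel' hd2'⟩
  · rintro ⟨b, x⟩ hp
    simp only
    congr 1 <;> rw [Nat.mul_div_cancel_left _ hdpos]
  · rintro ⟨a1, a2⟩ hq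
    simp only [Finset.mem_filter, Finset.mem_product, Finset.mem_Icc] at hq
    obtain ⟨⟨⟨⟨ha11, ha12⟩, ha21, ha22⟩, hlt⟩, hg⟩ := hq
    have hd1' : d ∣ a1 := hg ▸ Nat.gcd_dvd_left a1 a2
    have hd2' : d ∣ a2 := hg ▸ Nat.gcd_dvd_right a1 a2
    simp only [hg]
    have h1 : (a1 : ℝ) = (d : ℝ) * ((a1 / d : ℕ) : ℝ) := by
      exact_mod_cast (Nat.mul_div_cancel' hd1').symm
    have h2 : (a2 : ℝ) = (d : ℝ) * ((a2 / d : ℕ) : ℝ) := by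
      exact_mod_cast (Nat.mul_div_cancel' hd2').symm
    have hdne : (d : ℝ) ≠ 0 := by positivity
    rw [h1, h2]
    field_simp

theorem S2_eval (A : ℕ) (hA : 1 ≤ A) :
    ∑ q ∈ (Finset.Icc 1 A ×ˢ Finset.Icc 1 A).filter (fun q : ℕ × ℕ => q.1 < q.2),
        ((q.1 : ℝ) + q.2) / (Nat.gcd q.1 q.2 : ℝ) =
      3 / 2 * ∑ d ∈ Finset.Icc 1 A, ∑ b ∈ Finset.Icc 2 (A / d), (b : ℝ) * (Nat.totient b : ℝ) := by
  have hmaps : ∀ q ∈ (Finset.Icc 1 A ×ˢ Finset.Icc 1 A).filter (fun q : ℕ × ℕ => q.1 < q.2),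
      Nat.gcd q.1 q.2 ∈ Finset.Icc 1 A := by
    rintro ⟨a1, a2⟩ hq
    simp only [Finset.mem_filter, Finset.mem_product, Finset.mem_Icc] at hq ⊢
    obtain ⟨⟨⟨ha11, ha12⟩, ha21, ha22⟩, hlt⟩ := hq
    constructor
    · exact Nat.le_of_dvd (by omega) (Nat.gcd_dvd_left a1 a2) |>.trans ha12 |> fun _ =>
        Nat.gcd_pos_of_pos_left a2 (by omega)
    · exact le_trans (Nat.le_of_dvd (by omega) (Nat.gcd_dvd_left a1 a2)) ha12
  rw [← Finset.sum_fiberwise_of_maps_to hmaps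
    (fun q : ℕ × ℕ => ((q.1 : ℝ) + q.2) / (Nat.gcd q.1 q.2 : ℝ)), Finset.mul_sum]
  refine Finset.sum_congr rfl ?_
  intro d hd
  simp only [Finset.mem_Icc] at hd
  rw [fiber_eval A d hd.1, Finset.mul_sum]
  exact Finset.sum_congr rfl fun b hb => inner_eval b (Finset.mem_Icc.mp hb).1
end

section
/- Let p be a prime, N a positive integer, M an integer, and A ≥ 30 an integer with N > 7A and 2·A·N < p. For each residue x mod p let v(x) be the number of pairs (a, n) with 1 ≤ a ≤ A, M < n ≤ M + N, and n ≡ a·x (mod p). Then the sum of v(x)² over all residues x mod p is at most 2·A·N·log(1.85·A). -/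
open Finset Real

/-!
Expanding the square, `∑ₓ v(x)²` counts the pairs `(a, n), (a', n')` with `n a' ≡ n' a (mod p)`.
For fixed `a, a'` any two solutions `(n₁, n₁')`, `(n₂, n₂')` satisfy `a' (n₁ - n₂) = a (n₁' - n₂')`
exactly: their difference is a multiple of `p` of absolute value below `(a + a') N ≤ 2 A N < p`.
So `n` is determined by `n'`, and `n'` runs through a single residue class modulo
`a' / gcd(a, a')` (symmetrically for `n`), which leaves at most `N gcd(a, a') / max(a, a') + 1`
solutions. Writing `a = d b`, `a' = d b'` with `d = gcd(a, a')`,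
`∑_{a, a' ≤ A} gcd(a, a') / max(a, a') ≤ ∑_{d ≤ A} ∑_{b, b' ≤ A/d} 1 / max(b, b')
= ∑_{d ≤ A} (2 ⌊A/d⌋ - H_{⌊A/d⌋}) ≤ A + 2 A log A`.
Finally `N (A + 2 A log A) + A² ≤ 2 A N log (1.85 A)` because `log 1.85 > 4/7` and `N > 7 A`.
-/

theorem sum_card_fiber_sq {ι κ : Type*} [Fintype κ] [DecidableEq κ] (s : Finset ι) (φ : ι → κ) :
    ∑ y, #{i ∈ s | φ i = y} ^ 2 = #{ii ∈ s ×ˢ s | φ ii.1 = φ ii.2} := by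
  rw [card_eq_sum_card_fiberwise (f := fun ii => φ ii.1) (t := univ) fun _ _ => mem_univ _]
  refine sum_congr rfl fun y _ => ?_
  rw [sq, ← card_product, ← filter_product, filter_filter]
  exact congrArg card (filter_congr fun ii _ => by grind)

theorem card_filter_product_product {α β : Type*} (s : Finset α) (t : Finset β)
    (P : α → β → α → β → Prop) [∀ a n a' n', Decidable (P a n a' n')] :
    #{x ∈ (s ×ˢ t) ×ˢ (s ×ˢ t) | P x.1.1 x.1.2 x.2.1 x.2.2} =
      ∑ a ∈ s, ∑ a' ∈ s, #{nn ∈ t ×ˢ t | P a nn.1 a' nn.2} := by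
  simp only [card_filter, sum_product]
  exact sum_congr rfl fun _ _ => sum_comm

theorem sum_sq_card_filter_eq_sum_card_modEq (p : ℕ) [Fact p.Prime] (s : Finset ℕ)
    (t : Finset ℤ) (hs : ∀ a ∈ s, (a : ZMod p) ≠ 0) :
    ∑ x : ZMod p, #{q ∈ s ×ˢ t | (q.2 : ZMod p) = q.1 * x} ^ 2 =
      ∑ a ∈ s, ∑ a' ∈ s, #{nn ∈ t ×ˢ t | nn.1 * a' ≡ nn.2 * a [ZMOD p]} := by
  have hne : ∀ q ∈ s ×ˢ t, (q.1 : ZMod p) ≠ 0 := fun q hq => hs _ (mem_product.1 hq).1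
  calc ∑ x : ZMod p, #{q ∈ s ×ˢ t | (q.2 : ZMod p) = q.1 * x} ^ 2
      = ∑ x : ZMod p, #{q ∈ s ×ˢ t | (q.2 : ZMod p) / q.1 = x} ^ 2 := by
        refine sum_congr rfl fun x _ => ?_
        rw [filter_congr fun q hq => by rw [mul_comm, ← div_eq_iff (hne q hq)]]
    _ = #{qq ∈ (s ×ˢ t) ×ˢ (s ×ˢ t) | qq.1.2 * qq.2.1 ≡ qq.2.2 * qq.1.1 [ZMOD p]} := by
        rw [sum_card_fiber_sq]
        refine congrArg card (filter_congr fun qq hqq => ?_)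
        rw [mem_product] at hqq
        rw [div_eq_div_iff (hne _ hqq.1) (hne _ hqq.2), ← ZMod.intCast_eq_intCast_iff]
        push_cast
        rfl
    _ = _ := card_filter_product_product s t fun a n a' n' => n * a' ≡ n' * a [ZMOD p]

theorem card_le_div_add_one_of_modEq {S : Finset ℤ} {L R b : ℤ} (hb : 0 < b) (hLR : L ≤ R)
    (hS : S ⊆ Icc L R) (hmod : ∀ x ∈ S, ∀ y ∈ S, x ≡ y [ZMOD b]) :
    (#S : ℝ) ≤ (R - L) / b + 1 := by
  have hcard : #S ≤ #(Icc 0 ((R - L) / b)) := by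
    refine card_le_card_of_injOn (fun x => (x - L) / b) (fun x hx => ?_) fun x hx y hy hxy => ?_
    · obtain ⟨hLx, hxR⟩ := mem_Icc.1 (hS hx)
      exact mem_Icc.2 ⟨Int.ediv_nonneg (by omega) hb.le, Int.ediv_le_ediv hb (by omega)⟩
    · have hrem : (x - L) % b = (y - L) % b := (hmod x hx y hy).sub_right L
      have hx' := Int.mul_ediv_add_emod (x - L) b
      have hy' := Int.mul_ediv_add_emod (y - L) b
      simp only at hxy
      rw [hxy, hrem] at hx'
      linarith
  rw [Int.card_Icc] at hcard
  have hcardZ : (#S : ℤ) * b ≤ R - L + b := calc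
    (#S : ℤ) * b ≤ ((R - L) / b + 1) * b := by
      gcongr
      have := Int.ediv_nonneg (sub_nonneg.2 hLR) hb.le
      omega
    _ ≤ R - L + b := by linarith [Int.ediv_mul_le (R - L) hb.ne']
  have hbR : (0 : ℝ) < b := by exact_mod_cast hb
  rw [div_add_one hbR.ne', le_div_iff₀ hbR]
  exact_mod_cast hcardZ

theorem card_le_of_mul_sub_eq {T : Finset (ℤ × ℤ)} {L R : ℤ} {a a' : ℕ} (ha' : 0 < a')
    (hLR : L ≤ R) (hT : T ⊆ Icc L R ×ˢ Icc L R)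
    (hrel : ∀ s ∈ T, ∀ t ∈ T, (a' : ℤ) * (s.1 - t.1) = a * (s.2 - t.2)) :
    (#T : ℝ) ≤ (R - L) * Nat.gcd a a' / a' + 1 := by
  set g := Nat.gcd a a'
  have hg : 0 < g := Nat.gcd_pos_of_pos_right a ha'
  have hinj : Set.InjOn Prod.snd (T : Set (ℤ × ℤ)) := by
    intro s hs t ht hst
    have := hrel s hs t ht
    rw [hst, sub_self, mul_zero, mul_eq_zero] at this
    exact Prod.ext (by omega) hst
  have hsub : T.image Prod.snd ⊆ Icc L R := fun x hx => by
    obtain ⟨s, hs, rfl⟩ := mem_image.1 hx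
    exact (mem_product.1 (hT hs)).2
  have hmod : ∀ x ∈ T.image Prod.snd, ∀ y ∈ T.image Prod.snd, x ≡ y [ZMOD (a' / g : ℕ)] := by
    simp only [mem_image]
    rintro _ ⟨s, hs, rfl⟩ _ ⟨t, ht, rfl⟩
    have h : (a : ℤ) * s.2 ≡ a * t.2 [ZMOD a'] :=
      Int.modEq_iff_dvd.2 ⟨t.1 - s.1, by linarith [hrel t ht s hs]⟩
    simpa [Int.gcd_natCast_natCast, Nat.gcd_comm, g] using h.cancel_left_div_gcd (by omega)
  have hb : 0 < a' / g := Nat.div_pos (Nat.le_of_dvd ha' (Nat.gcd_dvd_right a a')) hg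
  have := card_le_div_add_one_of_modEq (by exact_mod_cast hb) hLR hsub hmod
  rw [card_image_of_injOn hinj] at this
  convert this using 2
  rw [Int.cast_natCast, Nat.cast_div (Nat.gcd_dvd_right a a') (by positivity),
    div_div_eq_mul_div]

theorem mul_sub_eq_of_modEq {m L R : ℤ} {a a' : ℕ} (hm : (a + a') * (R - L) < m)
    {s t : ℤ × ℤ} (hs : s ∈ Icc L R ×ˢ Icc L R) (ht : t ∈ Icc L R ×ˢ Icc L R)
    (hs' : s.1 * a' ≡ s.2 * a [ZMOD m]) (ht' : t.1 * a' ≡ t.2 * a [ZMOD m]) :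
    (a' : ℤ) * (s.1 - t.1) = a * (s.2 - t.2) := by
  simp only [mem_product, mem_Icc] at hs ht
  have hdvd : m ∣ a * (s.2 - t.2) - a' * (s.1 - t.1) := by
    obtain ⟨k, hk⟩ := hs'.dvd
    obtain ⟨l, hl⟩ := ht'.dvd
    exact ⟨k - l, by linear_combination hk - hl⟩
  have hlt : |(a : ℤ) * (s.2 - t.2) - a' * (s.1 - t.1)| < m := by
    rw [abs_lt]
    constructor <;> nlinarith
  linarith [Int.eq_zero_of_abs_lt_dvd hdvd hlt]

theorem card_filter_modEq_le {m L R : ℤ} {a a' : ℕ} (ha : 0 < a) (ha' : 0 < a') (hLR : L ≤ R)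
    (hm : (a + a') * (R - L) < m) :
    (#{nn ∈ Icc L R ×ˢ Icc L R | nn.1 * a' ≡ nn.2 * a [ZMOD m]} : ℝ) ≤
      (R - L) * Nat.gcd a a' / max (a : ℝ) a' + 1 := by
  set T := {nn ∈ Icc L R ×ˢ Icc L R | nn.1 * a' ≡ nn.2 * a [ZMOD m]}
  have hrel : ∀ s ∈ T, ∀ t ∈ T, (a' : ℤ) * (s.1 - t.1) = a * (s.2 - t.2) := by
    intro s hs t ht
    rw [mem_filter] at hs ht
    exact mul_sub_eq_of_modEq hm hs.1 ht.1 hs.2 ht.2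
  rcases le_total a a' with h | h
  · rw [max_eq_right (by exact_mod_cast h)]
    exact card_le_of_mul_sub_eq ha' hLR (filter_subset _ _) hrel
  · rw [max_eq_left (by exact_mod_cast h), Nat.gcd_comm,
      ← card_image_of_injective T Prod.swap_injective]
    refine card_le_of_mul_sub_eq ha hLR (fun x hx => ?_) ?_
    · obtain ⟨s, hs, rfl⟩ := mem_image.1 hx
      exact mem_product.2 (mem_product.1 (filter_subset _ _ hs)).symm
    · simp only [mem_image]
      rintro _ ⟨s, hs, rfl⟩ _ ⟨t, ht, rfl⟩
      exact (hrel s hs t ht).symm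

theorem card_filter_modEq_Icc_le {p : ℕ} {N A : ℕ} (M : ℤ) (hN : 0 < N) (hANp : 2 * A * N < p)
    {a a' : ℕ} (ha : a ∈ Icc 1 A) (ha' : a' ∈ Icc 1 A) :
    (#{nn ∈ Icc (M + 1) (M + N) ×ˢ Icc (M + 1) (M + N) | nn.1 * a' ≡ nn.2 * a [ZMOD p]} : ℝ) ≤
      N * ((Nat.gcd a a' : ℝ) / max (a : ℝ) a') + 1 := by
  obtain ⟨ha1, haA⟩ := mem_Icc.1 ha
  obtain ⟨ha'1, ha'A⟩ := mem_Icc.1 ha'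
  have hm : ((a : ℤ) + a') * ((M + N) - (M + 1)) < p := by
    have : (a + a') * (N - 1) < p := calc
      (a + a') * (N - 1) ≤ 2 * A * N := by nlinarith [Nat.sub_le N 1]
      _ < p := hANp
    zify [show 1 ≤ N by omega] at this
    linarith
  refine (card_filter_modEq_le ha1 ha'1 (by omega) hm).trans ?_
  push_cast
  rw [mul_div_assoc]
  gcongr
  linarith

theorem sum_sum_one_div_max_eq (K : ℕ) :
    ∑ b ∈ Icc 1 K, ∑ b' ∈ Icc 1 K, (1 : ℝ) / max (b : ℝ) b' = 2 * K - harmonic K := by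
  induction K with
  | zero => simp
  | succ K ih =>
    have hrow : ∀ b ∈ Icc 1 K, (1 : ℝ) / max (b : ℝ) ((K + 1 : ℕ) : ℝ) = 1 / (K + 1) :=
      fun b hb => by
        rw [max_eq_right (by exact_mod_cast (mem_Icc.1 hb).2.trans K.le_succ)]
        push_cast; rfl
    have hcol : ∀ b ∈ Icc 1 K, (1 : ℝ) / max ((K + 1 : ℕ) : ℝ) (b : ℝ) = 1 / (K + 1) :=
      fun b hb => by
        rw [max_eq_left (by exact_mod_cast (mem_Icc.1 hb).2.trans K.le_succ)]
        push_cast; rfl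
    simp only [sum_Icc_succ_top (Nat.le_add_left 1 K), sum_add_distrib, ih, sum_congr rfl hrow,
      sum_congr rfl hcol, sum_const, Nat.card_Icc, nsmul_eq_mul, harmonic_succ, max_self]
    push_cast
    have hK : (K : ℝ) + 1 ≠ 0 := by positivity
    field_simp
    ring

theorem one_le_harmonic {n : ℕ} (hn : n ≠ 0) : 1 ≤ harmonic n := by
  rw [harmonic_eq_sum_Icc]
  simpa using single_le_sum (fun i _ => by positivity : ∀ i ∈ Icc 1 n, (0 : ℚ) ≤ (i : ℚ)⁻¹)
    (mem_Icc.2 ⟨le_rfl, Nat.one_le_iff_ne_zero.2 hn⟩ : 1 ∈ Icc 1 n)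

/-- The map `(a, a') ↦ (gcd, a / gcd, a' / gcd)` is injective; forgetting that the two quotients
are coprime only enlarges the sum. -/
theorem sum_sum_gcd_div_max_le_sum_sum_one_div_max (A : ℕ) :
    ∑ a ∈ Icc 1 A, ∑ a' ∈ Icc 1 A, (Nat.gcd a a' : ℝ) / max (a : ℝ) a' ≤
      ∑ d ∈ Icc 1 A, ∑ b ∈ Icc 1 (A / d), ∑ b' ∈ Icc 1 (A / d), (1 : ℝ) / max (b : ℝ) b' := by
  let g : ℕ × ℕ → (_ : ℕ) × ℕ × ℕ := fun q =>
    ⟨Nat.gcd q.1 q.2, q.1 / Nat.gcd q.1 q.2, q.2 / Nat.gcd q.1 q.2⟩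
  let f : ((_ : ℕ) × ℕ × ℕ) → ℝ := fun x => 1 / max (x.2.1 : ℝ) x.2.2
  have hpos : ∀ q ∈ Icc 1 A ×ˢ Icc 1 A, 0 < Nat.gcd q.1 q.2 := fun q hq =>
    Nat.gcd_pos_of_pos_left _ (mem_Icc.1 (mem_product.1 hq).1).1
  have hfg : ∀ q ∈ Icc 1 A ×ˢ Icc 1 A, f (g q) = (Nat.gcd q.1 q.2 : ℝ) / max (q.1 : ℝ) q.2 :=
    fun q hq => by
      have hd : (Nat.gcd q.1 q.2 : ℝ) ≠ 0 := by exact_mod_cast (hpos q hq).ne'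
      simp only [f, g]
      rw [Nat.cast_div (Nat.gcd_dvd_left _ _) hd, Nat.cast_div (Nat.gcd_dvd_right _ _) hd,
        max_div_div_right (Nat.cast_nonneg _), one_div_div]
  have hinj : Set.InjOn g (Icc 1 A ×ˢ Icc 1 A : Finset (ℕ × ℕ)) := by
    intro q hq q' hq' hqq'
    simp only [g, Sigma.mk.inj_iff, heq_eq_eq, Prod.mk.injEq] at hqq'
    obtain ⟨hd, h1, h2⟩ := hqq'
    refine Prod.ext ?_ ?_
    · rw [← Nat.mul_div_cancel' (Nat.gcd_dvd_left q.1 q.2),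
        ← Nat.mul_div_cancel' (Nat.gcd_dvd_left q'.1 q'.2), h1, hd]
    · rw [← Nat.mul_div_cancel' (Nat.gcd_dvd_right q.1 q.2),
        ← Nat.mul_div_cancel' (Nat.gcd_dvd_right q'.1 q'.2), h2, hd]
  have himage : (Icc 1 A ×ˢ Icc 1 A).image g ⊆
      (Icc 1 A).sigma fun d => Icc 1 (A / d) ×ˢ Icc 1 (A / d) := by
    intro x hx
    obtain ⟨q, hq, rfl⟩ := mem_image.1 hx
    have hd := hpos q hq
    simp only [mem_product, mem_Icc] at hq
    simp only [g, mem_sigma, mem_product, mem_Icc]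
    refine ⟨⟨hd, (Nat.gcd_le_left _ hq.1.1).trans hq.1.2⟩, ⟨?_, ?_⟩, ?_, ?_⟩
    · exact Nat.div_pos (Nat.gcd_le_left _ hq.1.1) hd
    · exact Nat.div_le_div_right hq.1.2
    · exact Nat.div_pos (Nat.gcd_le_right _ hq.2.1) hd
    · exact Nat.div_le_div_right hq.2.2
  calc ∑ a ∈ Icc 1 A, ∑ a' ∈ Icc 1 A, (Nat.gcd a a' : ℝ) / max (a : ℝ) a'
      = ∑ x ∈ (Icc 1 A ×ˢ Icc 1 A).image g, f x := by
        rw [sum_image hinj, sum_product]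
        exact sum_congr rfl fun a ha => sum_congr rfl fun a' ha' =>
          (hfg (a, a') (mem_product.2 ⟨ha, ha'⟩)).symm
    _ ≤ ∑ x ∈ (Icc 1 A).sigma fun d => Icc 1 (A / d) ×ˢ Icc 1 (A / d), f x :=
        sum_le_sum_of_subset_of_nonneg himage fun x _ _ => by positivity
    _ = _ := by rw [sum_sigma]; simp only [sum_product, f]

theorem sum_sum_gcd_div_max_le (A : ℕ) :
    ∑ a ∈ Icc 1 A, ∑ a' ∈ Icc 1 A, (Nat.gcd a a' : ℝ) / max (a : ℝ) a' ≤ A + 2 * A * log A := by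
  calc ∑ a ∈ Icc 1 A, ∑ a' ∈ Icc 1 A, (Nat.gcd a a' : ℝ) / max (a : ℝ) a'
      ≤ ∑ d ∈ Icc 1 A, (2 * ((A / d : ℕ) : ℝ) - harmonic (A / d)) := by
        simpa only [sum_sum_one_div_max_eq] using sum_sum_gcd_div_max_le_sum_sum_one_div_max A
    _ ≤ ∑ d ∈ Icc 1 A, (2 * A * (d : ℝ)⁻¹ - 1) := by
        refine sum_le_sum fun d hd => ?_
        have hdA := mem_Icc.1 hd
        have hdiv : ((A / d : ℕ) : ℝ) ≤ A * (d : ℝ)⁻¹ := Nat.cast_div_le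
        have hH : (1 : ℝ) ≤ harmonic (A / d) := by
          exact_mod_cast one_le_harmonic (Nat.div_pos hdA.2 hdA.1).ne'
        linarith
    _ = 2 * A * harmonic A - A := by
        simp [sum_sub_distrib, ← mul_sum, harmonic_eq_sum_Icc]
    _ ≤ A + 2 * A * log A := by
        nlinarith [harmonic_le_one_add_log A, (Nat.cast_nonneg A : (0 : ℝ) ≤ A)]

theorem four_sevenths_le_log_one_point_eight_five : (4 / 7 : ℝ) ≤ log 1.85 := by
  have hsplit : log 1.85 = log 2 - log (40 / 37) := by rw [← log_div] <;> norm_num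
  linarith [log_two_gt_d9, log_le_sub_one_of_pos (by norm_num : (0 : ℝ) < 40 / 37)]

theorem V2_bound_improved_general (p : ℕ) (hp : p.Prime) [NeZero p] (N A : ℕ) (M : ℤ)
    (hNA : 7 * A < N) (hANp : 2 * A * N < p) :
    ∑ x : ZMod p,
        (((((Finset.Icc 1 A) ×ˢ (Finset.Icc (M + 1) (M + (N : ℤ)))).filter
            (fun q : ℕ × ℤ => ((q.2 : ZMod p) = (q.1 : ZMod p) * x))).card : ℝ)) ^ 2 ≤
      2 * A * N * Real.log (1.85 * A) := by
  have := Fact.mk hp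
  rcases Nat.eq_zero_or_pos A with rfl | hA
  · simp
  set I := Icc (M + 1) (M + (N : ℤ))
  have hunit : ∀ a ∈ Icc 1 A, (a : ZMod p) ≠ 0 := fun a ha => by
    rw [Ne, ZMod.natCast_eq_zero_iff]
    exact Nat.not_dvd_of_pos_of_lt (mem_Icc.1 ha).1 (by nlinarith [(mem_Icc.1 ha).2])
  calc ∑ x : ZMod p, ((#{q ∈ Icc 1 A ×ˢ I | (q.2 : ZMod p) = q.1 * x} : ℕ) : ℝ) ^ 2
      = ∑ a ∈ Icc 1 A, ∑ a' ∈ Icc 1 A, (#{nn ∈ I ×ˢ I | nn.1 * a' ≡ nn.2 * a [ZMOD p]} : ℝ) := by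
        exact_mod_cast sum_sq_card_filter_eq_sum_card_modEq p (Icc 1 A) I hunit
    _ ≤ ∑ a ∈ Icc 1 A, ∑ a' ∈ Icc 1 A, (N * ((Nat.gcd a a' : ℝ) / max (a : ℝ) a') + 1) :=
        sum_le_sum fun a ha => sum_le_sum fun a' ha' =>
          card_filter_modEq_Icc_le M (by omega) hANp ha ha'
    _ = N * ∑ a ∈ Icc 1 A, ∑ a' ∈ Icc 1 A, (Nat.gcd a a' : ℝ) / max (a : ℝ) a' + A * A := by
        simp [sum_add_distrib, mul_sum]
    _ ≤ N * (A + 2 * A * log A) + A * A := by gcongr; exact sum_sum_gcd_div_max_le A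
    _ ≤ 2 * A * N * log (1.85 * A) := by
        have hAR : (0 : ℝ) < A := by exact_mod_cast hA
        have hNAR : 7 * (A : ℝ) < N := by exact_mod_cast hNA
        have hlog := mul_le_mul_of_nonneg_left four_sevenths_le_log_one_point_eight_five
          (by positivity : (0 : ℝ) ≤ 2 * A * N)
        rw [log_mul (by norm_num) hAR.ne']
        nlinarith [mul_pos hAR (sub_pos.2 hNAR)]

theorem V2_bound_improved (p : ℕ) (hp : p.Prime) [NeZero p] (N A : ℕ) (M : ℤ)
    (hN : 0 < N) (hA : 30 ≤ A) (hNA : 7 * A < N) (hANp : 2 * A * N < p) :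
    ∑ x : ZMod p,
        (((((Finset.Icc 1 A) ×ˢ (Finset.Icc (M + 1) (M + (N : ℤ)))).filter
            (fun q : ℕ × ℤ => ((q.2 : ZMod p) = (q.1 : ZMod p) * x))).card : ℝ)) ^ 2 ≤
      2 * A * N * Real.log (1.85 * A) :=
  V2_bound_improved_general p hp N A M hNA hANp
end

section
/- The sequence r ↦ ((2r−3)!!·(r−1))^(1/r) is strictly increasing for integers r ≥ 2; in particular, for all integers r ≥ 2, ((2r−3)!!·(r−1))^(1/r) < ((2r−1)!!·r)^(1/(r+1)). -/
open Nat Real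

lemma aux_dfac (k : ℕ) : (2 * k + 1)‼ ≤ (2 * k + 1) ^ k := by
  induction k with
  | zero => simp [Nat.doubleFactorial]
  | succ n ih =>
      have h1 : 2 * (n + 1) + 1 = (2 * n + 1) + 2 := by ring
      rw [h1, Nat.doubleFactorial_add_two]
      calc (2 * n + 1 + 2) * (2 * n + 1)‼ ≤ (2 * n + 3) * (2 * n + 1) ^ n := by
            have : (2*n+1+2) = 2*n+3 := by ring
            rw [this]; exact Nat.mul_le_mul_left _ ih
        _ ≤ (2 * n + 3) * (2 * n + 3) ^ n := by
            exact Nat.mul_le_mul_left _ (Nat.pow_le_pow_left (by omega) n)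
        _ = (2 * n + 1 + 2) ^ (n + 1) := by ring

lemma aux_nat (k : ℕ) :
    ((2 * k + 1)‼ * (k + 1)) ^ (k + 3) < ((2 * k + 3)‼ * (k + 2)) ^ (k + 2) := by
  have hD : (2 * k + 3)‼ = (2 * k + 3) * (2 * k + 1)‼ := by
    have : 2 * k + 3 = (2 * k + 1) + 2 := by ring
    rw [this, Nat.doubleFactorial_add_two]
  set D := (2 * k + 1)‼ with hDdef
  have hDpos : 0 < D := Nat.doubleFactorial_pos _
  have key : D * (k + 1) ^ (k + 3) < (2 * k + 3) ^ (k + 2) * (k + 2) ^ (k + 2) := by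
    calc D * (k + 1) ^ (k + 3) ≤ (2 * k + 1) ^ k * (k + 1) ^ (k + 3) :=
          Nat.mul_le_mul_right _ (aux_dfac k)
      _ < (2 * k + 1) ^ k * (k + 2) ^ (k + 3) :=
          mul_lt_mul_of_pos_left (Nat.pow_lt_pow_left (by omega) (by omega)) (by positivity)
      _ = ((2 * k + 1) ^ k * (k + 2)) * (k + 2) ^ (k + 2) := by ring
      _ ≤ ((2 * k + 3) ^ k * (2 * k + 3) ^ 2) * (k + 2) ^ (k + 2) := by
          apply Nat.mul_le_mul_right
          apply Nat.mul_le_mul (Nat.pow_le_pow_left (by omega) k)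
          nlinarith
      _ = (2 * k + 3) ^ (k + 2) * (k + 2) ^ (k + 2) := by ring
  calc (D * (k + 1)) ^ (k + 3) = D ^ (k + 2) * (D * (k + 1) ^ (k + 3)) := by
        rw [mul_pow, pow_succ]; ring
    _ < D ^ (k + 2) * ((2 * k + 3) ^ (k + 2) * (k + 2) ^ (k + 2)) :=
        mul_lt_mul_of_pos_left key (by positivity)
    _ = ((2 * k + 3) * D * (k + 2)) ^ (k + 2) := by
        rw [mul_pow, mul_pow]; ring
    _ = ((2 * k + 3)‼ * (k + 2)) ^ (k + 2) := by rw [hD]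

theorem doubleFactorial_root_strict_mono (r : ℕ) (hr : 2 ≤ r) :
    ((Nat.doubleFactorial (2 * r - 3) * (r - 1) : ℕ) : ℝ) ^ ((1 : ℝ) / r) <
      ((Nat.doubleFactorial (2 * r - 1) * r : ℕ) : ℝ) ^ ((1 : ℝ) / (r + 1)) := by
  obtain ⟨k, rfl⟩ : ∃ k, r = k + 2 := ⟨r - 2, by omega⟩
  have h1 : 2 * (k + 2) - 3 = 2 * k + 1 := by omega
  have h2 : 2 * (k + 2) - 1 = 2 * k + 3 := by omega
  have h3 : k + 2 - 1 = k + 1 := by omega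
  rw [h1, h2, h3]
  set A : ℕ := (2 * k + 1)‼ * (k + 1) with hA
  set B : ℕ := (2 * k + 3)‼ * (k + 2) with hB
  have hAnn : (0:ℝ) ≤ (A:ℝ) := Nat.cast_nonneg _
  have hBnn : (0:ℝ) ≤ (B:ℝ) := Nat.cast_nonneg _
  apply lt_of_pow_lt_pow_left₀ ((k + 2) * (k + 3)) (Real.rpow_nonneg hBnn _)
  rw [← Real.rpow_natCast ((A:ℝ) ^ ((1:ℝ) / (k + 2 : ℕ))) ((k + 2) * (k + 3)),
      ← Real.rpow_natCast ((B:ℝ) ^ ((1:ℝ) / ((k + 2 : ℕ) + 1))) ((k + 2) * (k + 3)),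
      ← Real.rpow_mul hAnn, ← Real.rpow_mul hBnn]
  have e1 : (1:ℝ) / (k + 2 : ℕ) * (((k + 2) * (k + 3) : ℕ) : ℝ) = ((k + 3 : ℕ) : ℝ) := by
    push_cast
    rw [one_div, inv_mul_eq_div, div_eq_iff (by positivity)]; ring
  have e2 : (1:ℝ) / ((k + 2 : ℕ) + 1) * (((k + 2) * (k + 3) : ℕ) : ℝ) = ((k + 2 : ℕ) : ℝ) := by
    push_cast
    rw [one_div, inv_mul_eq_div, div_eq_iff (by positivity)]; ring
  rw [e1, e2, Real.rpow_natCast, Real.rpow_natCast]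
  exact_mod_cast aux_nat k
end
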